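/- arXiv:1104.1709 — 2 statements merged into one kernel-verified Lean document; each statement's English description precedes it below -/
import Mathlib

section
/- Let H be a complex Hilbert space, F_1,…,F_N continuous linear functionals on H, v_1,…,v_N complex numbers with V(F,v) = {f ∈ H : F_ν(f) = v_ν for all ν} nonempty, s the unique minimal-norm element of V(F,v), and K ≥ ‖s‖. Then for every g ∈ Q(F,v,K) = V(F,v) ∩ {g ∈ H : ‖g‖ ≤ K} one has ‖s − g‖ ≤ (1/2)·diam Q(F,v,K), where diam denotes the metric diameter of the set. (Corollary 3.1 of the paper: the spline is an optimal approximation in the sense of Golomb and Weinberger.) -/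
/-!
The spline `s` is orthogonal to the kernel `U = ⋂ ker F_ν` (it minimises the norm on `s + U`),
so the point reflection `2s - g` of any `g ∈ Q` through `s` lies in `s + U` and has the same norm
as `g`. Hence `Q` is symmetric about `s`, and `2‖s - g‖ = ‖g - (2s - g)‖ ≤ diam Q`.
-/

open scoped InnerProductSpace
open Metric

theorem dist_le_half_diam_of_pointReflection_mem {V P : Type*} [NormedAddCommGroup V]
    [NormedSpace ℝ V] [MetricSpace P] [NormedAddTorsor V P] {S : Set P}
    (hS : Bornology.IsBounded S) {p q : P} (hq : q ∈ S) (hpq : Equiv.pointReflection p q ∈ S) :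
    dist p q ≤ diam S / 2 := by
  have h := dist_le_diam_of_mem hS hq hpq
  rw [dist_right_pointReflection ℝ, Real.norm_two] at h
  linarith

theorem Submodule.inner_eq_zero_of_forall_norm_le_norm_sub {𝕜 E : Type*} [RCLike 𝕜]
    [NormedAddCommGroup E] [InnerProductSpace 𝕜 E] (K : Submodule 𝕜 E) {s : E}
    (hs : ∀ u ∈ K, ‖s‖ ≤ ‖s - u‖) : ∀ u ∈ K, ⟪s, u⟫_𝕜 = 0 := by
  have hinf : ‖s - 0‖ = ⨅ u : K, ‖s - u‖ :=
    le_antisymm (le_ciInf fun u ↦ by simpa using hs u u.2)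
      (ciInf_le ⟨0, Set.forall_mem_range.2 fun _ ↦ norm_nonneg _⟩ (0 : K))
  simpa using (K.norm_eq_iInf_iff_inner_eq_zero K.zero_mem).1 hinf

section Spline

variable {𝕜 E ι : Type*} [RCLike 𝕜] [NormedAddCommGroup E] [InnerProductSpace 𝕜 E]
  {F : ι → E →L[𝕜] 𝕜} {v : ι → 𝕜} {s : E}

theorem inner_sub_eq_zero_of_forall_norm_le (hsV : ∀ ν, F ν s = v ν)
    (hmin : ∀ g : E, (∀ ν, F ν g = v ν) → ‖s‖ ≤ ‖g‖) {g : E} (hg : ∀ ν, F ν g = v ν) :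
    ⟪s, s - g⟫_𝕜 = 0 := by
  let U : Submodule 𝕜 E := ⨅ ν, LinearMap.ker (F ν : E →ₗ[𝕜] 𝕜)
  have hU : ∀ u, u ∈ U ↔ ∀ ν, F ν u = 0 := by simp [U, Submodule.mem_iInf]
  refine U.inner_eq_zero_of_forall_norm_le_norm_sub (fun u hu ↦ hmin _ fun ν ↦ ?_) _ ?_
  · simp [hsV ν, (hU u).1 hu ν]
  · exact (hU _).2 fun ν ↦ by simp [hsV ν, hg ν]

theorem apply_pointReflection_eq (hsV : ∀ ν, F ν s = v ν) {g : E} (hg : ∀ ν, F ν g = v ν)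
    (ν : ι) : F ν (Equiv.pointReflection s g) = v ν := by
  simp [Equiv.pointReflection_apply, hsV ν, hg ν]

theorem norm_pointReflection_eq_of_forall_norm_le (hsV : ∀ ν, F ν s = v ν)
    (hmin : ∀ g : E, (∀ ν, F ν g = v ν) → ‖s‖ ≤ ‖g‖) {g : E} (hg : ∀ ν, F ν g = v ν) :
    ‖Equiv.pointReflection s g‖ = ‖g‖ := by
  have horth := inner_eq_zero_symm.1 (inner_sub_eq_zero_of_forall_norm_le hsV hmin hg)
  rw [Equiv.pointReflection_apply, vsub_eq_sub, vadd_eq_add, add_comm,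
    ← norm_sub_eq_norm_add horth, sub_sub_cancel]

end Spline

theorem spline_optimal_approximation_general
    {H : Type*} [NormedAddCommGroup H] [InnerProductSpace ℂ H]
    {N : ℕ} (F : Fin N → (H →L[ℂ] ℂ)) (v : Fin N → ℂ) (s : H)
    (hsV : ∀ ν, F ν s = v ν)
    (hmin : ∀ g : H, (∀ ν, F ν g = v ν) → ‖s‖ ≤ ‖g‖)
    (K : ℝ) :
    ∀ g ∈ {g : H | (∀ ν, F ν g = v ν) ∧ ‖g‖ ≤ K},
      ‖s - g‖ ≤ (1 / 2) * Metric.diam {g : H | (∀ ν, F ν g = v ν) ∧ ‖g‖ ≤ K} := by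
  rintro g ⟨hgV, hgK⟩
  have hbdd : Bornology.IsBounded {g : H | (∀ ν, F ν g = v ν) ∧ ‖g‖ ≤ K} :=
    (isBounded_closedBall (x := 0) (r := K)).subset fun x hx ↦ by simpa using hx.2
  have hrefl : Equiv.pointReflection s g ∈ {g : H | (∀ ν, F ν g = v ν) ∧ ‖g‖ ≤ K} :=
    ⟨apply_pointReflection_eq hsV hgV,
      (norm_pointReflection_eq_of_forall_norm_le hsV hmin hgV).trans_le hgK⟩
  rw [← dist_eq_norm, one_div_mul_eq_div]
  exact dist_le_half_diam_of_pointReflection_mem hbdd ⟨hgV, hgK⟩ hrefl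

/-- Corollary 3.1, optimality in the sense of Golomb–Weinberger:
for every `g` in `Q(F,v,K) = V(F,v) ∩ {g : ‖g‖ ≤ K}` (with `K ≥ ‖s‖`),
`‖s - g‖ ≤ (1/2) · diam Q(F,v,K)`. -/
theorem spline_optimal_approximation
    {H : Type*} [NormedAddCommGroup H] [InnerProductSpace ℂ H] [CompleteSpace H]
    {N : ℕ} (F : Fin N → (H →L[ℂ] ℂ)) (v : Fin N → ℂ) (s : H)
    (hsV : ∀ ν, F ν s = v ν)
    (hmin : ∀ g : H, (∀ ν, F ν g = v ν) → ‖s‖ ≤ ‖g‖)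
    (K : ℝ) (hK : ‖s‖ ≤ K) :
    ∀ g ∈ {g : H | (∀ ν, F ν g = v ν) ∧ ‖g‖ ≤ K},
      ‖s - g‖ ≤ (1 / 2) * Metric.diam {g : H | (∀ ν, F ν g = v ν) ∧ ‖g‖ ≤ K} :=
  spline_optimal_approximation_general F v s hsV hmin K
end

section
/- Let (λ_j)_{j∈ℕ} be a sequence of nonnegative real numbers, (c_j)_{j∈ℕ} a sequence of complex numbers, and a > 0, s > 0, t ≥ 0 real numbers. Let m = 2^l for some natural number l, and assume Σ_j |c_j|² < ∞ and Σ_j λ_j^{2(ms+t)} |c_j|² < ∞. If Σ_j |c_j|² ≤ a² Σ_j λ_j^{2s} |c_j|², then Σ_j λ_j^{2t} |c_j|² ≤ a^{2m} Σ_j λ_j^{2(ms+t)} |c_j|². (Lemma 4.3 of the paper in Fourier-coefficient form: ‖f‖ ≤ a‖Δ^s f‖ implies ‖Δ^t f‖ ≤ a^m ‖Δ^{ms+t} f‖ for all t ≥ 0 and m = 2^l.) -/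
/-!
Write `M r = ∑ λ_j ^ r |c_j|²`. The weighted Hölder inequality makes `M` log-convex:
`M r ≤ M 0 ^ (1 - r/R) * M R ^ (r/R)` for `0 ≤ r ≤ R`. Take `R = 2(ms + t)`. At `r = 2s` this
turns the hypothesis `M 0 ≤ a² M (2s)` into `M 0 ≤ (a²) ^ (R/2s) M R`; feeding that into the
interpolation at `r = 2t` gives `M (2t) ≤ (a²) ^ ((R - 2t)/2s) M R = a^{2m} M R`.
-/

open Finset

theorem Real.inner_le_weight_mul_Lp_tsum_of_nonneg {ι : Type*} {w f : ι → ℝ} {p : ℝ}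
    (hp : 1 ≤ p) (hw : ∀ i, 0 ≤ w i) (hf : ∀ i, 0 ≤ f i) (hw_sum : Summable w)
    (hwf_sum : Summable fun i => w i * f i ^ p) :
    ∑' i, w i * f i ≤ (∑' i, w i) ^ (1 - p⁻¹) * (∑' i, w i * f i ^ p) ^ p⁻¹ := by
  refine Real.tsum_le_of_sum_le (fun i => mul_nonneg (hw i) (hf i)) fun u => ?_
  have hwfp : ∀ i, 0 ≤ w i * f i ^ p := fun i => mul_nonneg (hw i) (rpow_nonneg (hf i) p)
  calc ∑ i ∈ u, w i * f i
      ≤ (∑ i ∈ u, w i) ^ (1 - p⁻¹) * (∑ i ∈ u, w i * f i ^ p) ^ p⁻¹ :=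
        inner_le_weight_mul_Lp_of_nonneg u hp w f hw hf
    _ ≤ (∑' i, w i) ^ (1 - p⁻¹) * (∑' i, w i * f i ^ p) ^ p⁻¹ := by
      have hp₀ : 0 ≤ p⁻¹ := by positivity
      have hp₁ : 0 ≤ 1 - p⁻¹ := sub_nonneg.2 (inv_le_one_of_one_le₀ hp)
      exact mul_le_mul
        (rpow_le_rpow (sum_nonneg fun i _ => hw i) (hw_sum.sum_le_tsum u fun i _ => hw i) hp₁)
        (rpow_le_rpow (sum_nonneg fun i _ => hwfp i)
          (hwf_sum.sum_le_tsum u fun i _ => hwfp i) hp₀)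
        (rpow_nonneg (sum_nonneg fun i _ => hwfp i) _)
        (rpow_nonneg (tsum_nonneg hw) _)

theorem Real.le_rpow_inv_mul_of_le_mul_rpow {A T b u : ℝ} (hA : 0 ≤ A) (hT : 0 ≤ T) (hb : 0 ≤ b)
    (hu : 0 < u) (h : A ≤ b * (A ^ (1 - u) * T ^ u)) : A ≤ b ^ u⁻¹ * T := by
  rcases hA.eq_or_lt with rfl | hA
  · positivity
  have hAu : A ^ u ≤ b * T ^ u := by
    refine le_of_mul_le_mul_left ?_ (rpow_pos_of_pos hA (1 - u))
    calc A ^ (1 - u) * A ^ u = A := by rw [← rpow_add hA, sub_add_cancel, rpow_one]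
      _ ≤ A ^ (1 - u) * (b * T ^ u) := by linarith
  calc A = (A ^ u) ^ u⁻¹ := by rw [← rpow_mul hA.le, mul_inv_cancel₀ hu.ne', rpow_one]
    _ ≤ (b * T ^ u) ^ u⁻¹ := by gcongr
    _ = b ^ u⁻¹ * T := by
      rw [mul_rpow hb (rpow_nonneg hT u), ← rpow_mul hT, mul_inv_cancel₀ hu.ne', rpow_one]

noncomputable def powerMoment {ι : Type*} (lam w : ι → ℝ) (r : ℝ) : ℝ :=
  ∑' i, lam i ^ r * w i

section powerMoment

variable {ι : Type*} {lam w : ι → ℝ}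

theorem powerMoment_zero : powerMoment lam w 0 = ∑' i, w i := by
  simp [powerMoment]

theorem powerMoment_nonneg (hlam : ∀ i, 0 ≤ lam i) (hw : ∀ i, 0 ≤ w i) (r : ℝ) :
    0 ≤ powerMoment lam w r :=
  tsum_nonneg fun i => mul_nonneg (Real.rpow_nonneg (hlam i) r) (hw i)

theorem powerMoment_le_rpow_mul_rpow (hlam : ∀ i, 0 ≤ lam i) (hw : ∀ i, 0 ≤ w i)
    (hw_sum : Summable w) {r R : ℝ} (hR_sum : Summable fun i => lam i ^ R * w i)
    (hr : 0 ≤ r) (hrR : r ≤ R) :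
    powerMoment lam w r ≤ powerMoment lam w 0 ^ (1 - r / R) * powerMoment lam w R ^ (r / R) := by
  rcases hr.eq_or_lt with rfl | hr
  · simp
  have hpow : ∀ i, (lam i ^ r) ^ (R / r) = lam i ^ R := fun i => by
    rw [← Real.rpow_mul (hlam i), mul_div_cancel₀ R hr.ne']
  have key := Real.inner_le_weight_mul_Lp_tsum_of_nonneg ((one_le_div₀ hr).2 hrR) hw
    (fun i => Real.rpow_nonneg (hlam i) r) hw_sum (by simpa only [hpow, mul_comm] using hR_sum)
  rw [powerMoment_zero]
  simpa only [powerMoment, hpow, inv_div, mul_comm (w _)] using key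

theorem powerMoment_le_rpow_mul_of_powerMoment_zero_le
    (hlam : ∀ i, 0 ≤ lam i) (hw : ∀ i, 0 ≤ w i) (hw_sum : Summable w) {b s t R : ℝ}
    (hR_sum : Summable fun i => lam i ^ R * w i) (hb : 0 ≤ b) (hs : 0 < s) (hsR : s ≤ R)
    (ht : 0 ≤ t) (htR : t ≤ R) (h : powerMoment lam w 0 ≤ b * powerMoment lam w s) :
    powerMoment lam w t ≤ b ^ ((R - t) / s) * powerMoment lam w R := by
  have hR : 0 < R := hs.trans_le hsR
  have hT := powerMoment_nonneg hlam hw R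
  have hAT : powerMoment lam w 0 ≤ b ^ (s / R)⁻¹ * powerMoment lam w R :=
    Real.le_rpow_inv_mul_of_le_mul_rpow (powerMoment_nonneg hlam hw 0) hT hb (div_pos hs hR)
      (h.trans (mul_le_mul_of_nonneg_left
        (powerMoment_le_rpow_mul_rpow hlam hw hw_sum hR_sum hs.le hsR) hb))
  have ht_div : 0 ≤ 1 - t / R := sub_nonneg.2 ((div_le_one hR).2 htR)
  calc powerMoment lam w t
      ≤ powerMoment lam w 0 ^ (1 - t / R) * powerMoment lam w R ^ (t / R) :=
        powerMoment_le_rpow_mul_rpow hlam hw hw_sum hR_sum ht htR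
    _ ≤ (b ^ (s / R)⁻¹ * powerMoment lam w R) ^ (1 - t / R) * powerMoment lam w R ^ (t / R) := by
        gcongr
        exact powerMoment_nonneg hlam hw 0
    _ = b ^ ((R - t) / s) * powerMoment lam w R := by
        rw [Real.mul_rpow (Real.rpow_nonneg hb _) hT, ← Real.rpow_mul hb, mul_assoc,
          ← Real.rpow_add' hT (by simp), sub_add_cancel, Real.rpow_one]
        congr 2
        field_simp

end powerMoment

theorem lemma_4_3_general
    (lam : ℕ → ℝ) (hlam : ∀ j, 0 ≤ lam j) (c : ℕ → ℂ) (a s t : ℝ)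
    (hs : 0 < s) (ht : 0 ≤ t) (m : ℕ)
    (h1 : Summable fun j => ‖c j‖ ^ 2)
    (h2 : Summable fun j => lam j ^ (2 * ((m : ℝ) * s + t)) * ‖c j‖ ^ 2)
    (hyp : ∑' j, ‖c j‖ ^ 2 ≤ a ^ 2 * ∑' j, lam j ^ (2 * s) * ‖c j‖ ^ 2) :
    ∑' j, lam j ^ (2 * t) * ‖c j‖ ^ 2 ≤
      a ^ (2 * m) * ∑' j, lam j ^ (2 * ((m : ℝ) * s + t)) * ‖c j‖ ^ 2 := by
  rcases Nat.eq_zero_or_pos m with rfl | hm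
  · simp
  have hm₁ : (1 : ℝ) ≤ m := by exact_mod_cast hm
  have key := powerMoment_le_rpow_mul_of_powerMoment_zero_le (s := 2 * s) (t := 2 * t)
    hlam (fun j => by positivity) h1 h2 (sq_nonneg a) (by positivity) (by nlinarith)
    (by positivity) (by nlinarith) (by rwa [powerMoment_zero])
  have hexp : (2 * ((m : ℝ) * s + t) - 2 * t) / (2 * s) = m := by field_simp; ring
  rwa [hexp, Real.rpow_natCast, ← pow_mul] at key

/-- Lemma 4.3, Fourier form: for `m = 2^l` and `t ≥ 0`, if
`∑ |c_j|² ≤ a² ∑ λ_j^{2s} |c_j|²`, then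
`∑ λ_j^{2t} |c_j|² ≤ a^{2m} ∑ λ_j^{2(ms+t)} |c_j|²`. -/
theorem lemma_4_3
    (lam : ℕ → ℝ) (hlam : ∀ j, 0 ≤ lam j) (c : ℕ → ℂ) (a s t : ℝ)
    (ha : 0 < a) (hs : 0 < s) (ht : 0 ≤ t) (m l : ℕ) (hm : m = 2 ^ l)
    (h1 : Summable fun j => ‖c j‖ ^ 2)
    (h2 : Summable fun j => lam j ^ (2 * ((m : ℝ) * s + t)) * ‖c j‖ ^ 2)
    (hyp : ∑' j, ‖c j‖ ^ 2 ≤ a ^ 2 * ∑' j, lam j ^ (2 * s) * ‖c j‖ ^ 2) :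
    ∑' j, lam j ^ (2 * t) * ‖c j‖ ^ 2 ≤
      a ^ (2 * m) * ∑' j, lam j ^ (2 * ((m : ℝ) * s + t)) * ‖c j‖ ^ 2 :=
  lemma_4_3_general lam hlam c a s t hs ht m h1 h2 hyp
end
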